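/- Let N ≥ 2 and N/2 < K < N be integers, and fix η₀ ∈ ℰ_{N,K} and t ≥ 0. Let μ₀ be the probability vector (1/K) Σ_{k ∈ ℤ/Kℤ} δ_{(x_k(η₀) mod N, η₀)} on S, and μ_t = μ₀ · exp(t Q^{tag}). Then the pushforward of μ_t under the map (x,η) ↦ (r(x,η), η) is the product of the uniform measure on ℤ/Kℤ with δ_{η₀} · exp(t Q^ℰ); that is, for every k ∈ ℤ/Kℤ and every η ∈ ℰ_{N,K}, μ_t((x_k(η) mod N, η)) = (1/K) · (δ_{η₀} exp(t Q^ℰ))(η). -/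

import Mathlib

open scoped Classical BigOperators

noncomputable section

/-- A particle configuration on the discrete circle `ℤ/Mℤ`. -/
abbrev Conf (M : ℕ) := ZMod M → Bool

/-- Number of occupied sites (particles) of a configuration. -/
def numParticles {M : ℕ} [NeZero M] (η : Conf M) : ℕ :=
  (Finset.univ.filter fun x => η x = true).card

/-- Ergodicity: every pair of neighbouring sites carries at least one particle. -/
def isErgodic {M : ℕ} (η : Conf M) : Prop :=
  ∀ x : ZMod M, η x = true ∨ η (x + 1) = true

/-- The configuration `η` with the values at `x` and `y` exchanged. -/
def swapConf {α : Type*} [DecidableEq α] (η : α → Bool) (x y : α) : α → Bool :=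
  fun z => if z = x then η y else if z = y then η x else η z

/-- The representative of `k ∈ ℤ/Kℤ` in `{1, …, K}`. -/
def repOne {K : ℕ} [NeZero K] (k : ZMod K) : ℕ :=
  if k.val = 0 then K else k.val

/-- `Σ_{y=1}^{x} η_y`, the number of particles among sites `1, …, x`. -/
def countUpTo {N : ℕ} (η : Conf N) (x : ℕ) : ℕ :=
  ∑ y ∈ Finset.Icc 1 x, (if η ((y : ℕ) : ZMod N) = true then 1 else 0)

/-- `x_k(η) ∈ {1, …, N}`: the position of the `k`-th particle of `η`. -/
def pos {N K : ℕ} [NeZero K] (η : Conf N) (k : ZMod K) : ℕ :=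
  sInf {x : ℕ | 1 ≤ x ∧ x ≤ N ∧ countUpTo η x = repOne k}

/-- The clockwise distance `d(a,b) ∈ {1, …, M}` from `a` to `b` on `ℤ/Mℤ`. -/
def cdist {M : ℕ} [NeZero M] (a b : ZMod M) : ℕ :=
  if (b - a).val = 0 then M else (b - a).val

/-- The (integer) value `σ^{(k,η)}_l = 2 − d(x_{k+l−1}(η), x_{k+l}(η))`. -/
def sigmaVal {N K : ℕ} [NeZero N] [NeZero K] (η : Conf N) (k l : ZMod K) : ℤ :=
  2 - (cdist ((pos η (k + l - 1) : ℕ) : ZMod N) ((pos η (k + l) : ℕ) : ZMod N) : ℤ)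

/-- The SSEP configuration `σ^{(k,η)}`, occupied at `l` iff `σ^{(k,η)}_l = 1`. -/
def sigmaConf {N K : ℕ} [NeZero N] [NeZero K] (η : Conf N) (k : ZMod K) : Conf K :=
  fun l => decide (cdist ((pos η (k + l - 1) : ℕ) : ZMod N) ((pos η (k + l) : ℕ) : ZMod N) = 1)

/-- Number of pairs `(x, z)`, `z ∈ {−1, +1}`, with `η_{x−z} = η_x = 1`, `η_{x+z} = 0` and
`η^{x,x+z} = η'`. -/
def jumpCount {N : ℕ} [NeZero N] (η η' : Conf N) : ℕ :=
  (Finset.univ.filter fun p : ZMod N × Bool =>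
    η (p.1 - (if p.2 then 1 else -1)) = true ∧ η p.1 = true
      ∧ η (p.1 + (if p.2 then 1 else -1)) = false
      ∧ swapConf η p.1 (p.1 + (if p.2 then 1 else -1)) = η').card

/-- The ergodic component `ℰ_{N,K}`, as a type. -/
abbrev ErgoT (N K : ℕ) [NeZero N] := {η : Conf N // numParticles η = K ∧ isErgodic η}

/-- The FEP generator restricted to the ergodic component. -/
def genErgo (N K : ℕ) [NeZero N] : Matrix (ErgoT N K) (ErgoT N K) ℝ :=
  fun η η' =>
    if η' = η then -(∑ η'' ∈ Finset.univ.filter (fun η'' => η'' ≠ η), (jumpCount η.1 η''.1 : ℝ))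
    else (jumpCount η.1 η'.1 : ℝ)

/-- The state space of the tagged-particle FEP: an ergodic configuration together with an
occupied (tagged) site. -/
abbrev TagT (N K : ℕ) [NeZero N] :=
  {p : ZMod N × Conf N // (numParticles p.2 = K ∧ isErgodic p.2) ∧ p.2 p.1 = true}

/-- Number of labelled transitions `(y, z)` leading from the tagged state `p` to the
tagged state `q`:  a particle at `y` with a neighbour at `y − z` jumps to the empty site
`y + z`; if `y` is the tagged site, the tag moves along. -/
def tagCount {N : ℕ} [NeZero N] (p q : ZMod N × Conf N) : ℕ :=
  (Finset.univ.filter fun yz : ZMod N × Bool =>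
    p.2 yz.1 = true ∧ p.2 (yz.1 - (if yz.2 then 1 else -1)) = true
      ∧ p.2 (yz.1 + (if yz.2 then 1 else -1)) = false
      ∧ q = ((if yz.1 = p.1 then p.1 + (if yz.2 then 1 else -1) else p.1),
             swapConf p.2 yz.1 (yz.1 + (if yz.2 then 1 else -1)))).card

/-- The generator of the tagged-particle FEP, as a matrix on `TagT N K`. -/
def genTag (N K : ℕ) [NeZero N] : Matrix (TagT N K) (TagT N K) ℝ :=
  fun p q =>
    if q = p then -(∑ r ∈ Finset.univ.filter (fun r => r ≠ p), (tagCount p.1 r.1 : ℝ))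
    else (tagCount p.1 q.1 : ℝ)

/-!
Let `Π = fiberIndicator ℝ untag` be the matrix with `Π(σ, (x, η)) = 1` if `η = σ` and `0`
otherwise. Since `k ↦ x_k(η₀)` enumerates the occupied sites of `η₀`, each exactly once, the
initial law is `μ₀ = (1/K) δ_{η₀} Π`. The tagged generator is lumpable from the left: summed
over the tags of a configuration `σ`, the rates into a tagged state `(w, η)` add up to
`Q^ℰ(σ, η)`, because each jump `σ → η` carries exactly one tag onto `w`; and the total rate out
of `(x, η)` is the total rate out of `η`. Hence `Π Q^tag = Q^ℰ Π`, so `Π e^{tQ^tag} = e^{tQ^ℰ} Π`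
and `μ_t = (1/K) δ_{η₀} e^{tQ^ℰ} Π`, whose value at `(x_k(η), η)` is `(1/K) (δ_{η₀} e^{tQ^ℰ})(η)`.
-/

open NormedSpace

namespace Matrix

section Exp

variable {m n 𝕂 : Type*} [Fintype m] [DecidableEq m] [Fintype n] [DecidableEq n] [RCLike 𝕂]

attribute [local instance] Matrix.linftyOpNormedRing Matrix.linftyOpNormedAlgebra

theorem exp_mul_eq_mul_exp_of_mul_eq {A : Matrix m m 𝕂} {B : Matrix n n 𝕂} {C : Matrix m n 𝕂}
    (h : A * C = C * B) : exp A * C = C * exp B := by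
  have hpow (j : ℕ) : A ^ j * C = C * B ^ j := by
    induction j with
    | zero => simp
    | succ j ih => rw [pow_succ, pow_succ, Matrix.mul_assoc, h, ← Matrix.mul_assoc, ih,
        Matrix.mul_assoc]
  have hA := (exp_series_hasSum_exp' (𝕂 := 𝕂) A).map (mulRightLinearMap m 𝕂 C)
    (continuous_id.matrix_mul continuous_const)
  have hB := (exp_series_hasSum_exp' (𝕂 := 𝕂) B).map (mulLeftLinearMap n 𝕂 C)
    (continuous_const.matrix_mul continuous_id)
  refine hA.unique (hB.congr_fun fun j => ?_)
  simp [hpow]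

end Exp

section RateMatrix

variable {m n R : Type*} [Ring R] [DecidableEq n]

variable (R) in
def fiberIndicator (f : m → n) : Matrix n m R := of fun b p => if f p = b then 1 else 0

lemma mul_fiberIndicator_apply {l : Type*} [Fintype n] (f : m → n) (M : Matrix l n R) (i : l)
    (p : m) : (M * fiberIndicator R f) i p = M i (f p) := by
  simp [fiberIndicator, mul_apply]

variable [Fintype m] [DecidableEq m]

def rateMatrix (c : m → m → R) : Matrix m m R :=
  fun p q => if q = p then -∑ r ∈ Finset.univ.filter (fun r => r ≠ p), c p r else c p q

lemma rateMatrix_eq_sub_diagonal {c : m → m → R} (hc : ∀ p, c p p = 0) :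
    rateMatrix c = of c - diagonal fun p => ∑ r, c p r := by
  ext p q
  rw [rateMatrix, Finset.filter_ne', Finset.sum_erase _ (hc p)]
  by_cases hqp : q = p
  · subst hqp
    simp [hc]
  · simp [hqp, Ne.symm hqp]

theorem fiberIndicator_mul_rateMatrix [Fintype n] {f : m → n} {c : m → m → R} {d : n → n → R}
    (hc : ∀ p, c p p = 0) (hd : ∀ b, d b b = 0)
    (hrow : ∀ p, ∑ r, c p r = ∑ b, d (f p) b)
    (hcol : ∀ b q, ∑ p ∈ Finset.univ.filter (fun p => f p = b), c p q = d b (f q)) :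
    fiberIndicator R f * rateMatrix c = rateMatrix d * fiberIndicator R f := by
  ext b q
  rw [rateMatrix_eq_sub_diagonal hc, rateMatrix_eq_sub_diagonal hd, Matrix.mul_sub,
    Matrix.sub_mul, sub_apply, sub_apply, mul_diagonal, diagonal_mul, mul_fiberIndicator_apply]
  have hfiber : (fiberIndicator R f * of c) b q = d b (f q) := by
    simp [← hcol, fiberIndicator, mul_apply, Finset.sum_filter]
  rw [hfiber]
  simp only [fiberIndicator, of_apply]
  split_ifs with hqb
  · rw [hrow, hqb, mul_one, one_mul]
  · simp

end RateMatrix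

end Matrix

section Rank

variable {N K : ℕ}

lemma countUpTo_succ (η : Conf N) (x : ℕ) :
    countUpTo η (x + 1) = countUpTo η x + if η ((x + 1 : ℕ) : ZMod N) = true then 1 else 0 :=
  Finset.sum_Icc_succ_top (by omega) _

lemma exists_countUpTo_eq (η : Conf N) {m n : ℕ} (h : m ≤ countUpTo η n) :
    ∃ x ≤ n, countUpTo η x = m := by
  induction n with
  | zero => exact ⟨0, le_rfl, by simp_all [countUpTo]⟩
  | succ n ih =>
    by_cases h' : m ≤ countUpTo η n
    · obtain ⟨x, hxn, hx⟩ := ih h'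
      exact ⟨x, by omega, hx⟩
    · refine ⟨n + 1, le_rfl, ?_⟩
      rw [countUpTo_succ] at h ⊢
      split_ifs at h ⊢ <;> omega

lemma val_natCast_sub_one_add_one {y : ℕ} (h1 : 1 ≤ y) (h2 : y ≤ N) :
    ((y : ZMod N) - 1).val + 1 = y := by
  rw [← Nat.cast_one, ← Nat.cast_sub h1, ZMod.val_natCast, Nat.mod_eq_of_lt (by omega)]
  omega

lemma natCast_injOn_Icc : Set.InjOn (Nat.cast : ℕ → ZMod N) (Set.Icc 1 N) :=
  fun a ha b hb hab => by
    rw [← val_natCast_sub_one_add_one ha.1 ha.2, ← val_natCast_sub_one_add_one hb.1 hb.2,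
      hab]

variable [NeZero K]

lemma one_le_repOne (k : ZMod K) : 1 ≤ repOne k := by
  unfold repOne
  split_ifs
  exacts [NeZero.one_le, Nat.one_le_iff_ne_zero.mpr ‹_›]

lemma repOne_le (k : ZMod K) : repOne k ≤ K := by
  unfold repOne
  split_ifs
  exacts [le_rfl, (ZMod.val_lt k).le]

lemma repOne_injective : Function.Injective (repOne : ZMod K → ℕ) := by
  intro k k' h
  have hk := ZMod.val_lt k
  have hk' := ZMod.val_lt k'
  unfold repOne at h
  apply ZMod.val_injective
  split_ifs at h <;> omega

lemma countUpTo_zero_ne_repOne (η : Conf N) (k : ZMod K) : countUpTo η 0 ≠ repOne k := by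
  have := one_le_repOne k
  simp only [countUpTo, Finset.Icc_eq_empty_of_lt zero_lt_one, Finset.sum_empty]
  omega

variable [NeZero N]

lemma countUpTo_eq_numParticles (η : Conf N) : countUpTo η N = numParticles η := by
  rw [countUpTo, numParticles, Finset.card_filter]
  refine Finset.sum_nbij' (fun y => (y : ZMod N)) (fun x => (x - 1).val + 1) ?_ ?_ ?_ ?_ ?_
  · simp
  · intro x _
    have := ZMod.val_lt (x - 1)
    rw [Finset.mem_Icc]
    omega
  · intro y hy
    rw [Finset.mem_Icc] at hy
    exact val_natCast_sub_one_add_one hy.1 hy.2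
  · simp
  · simp

variable {η : Conf N}

lemma pos_spec (hη : numParticles η = K) (k : ZMod K) :
    1 ≤ pos η k ∧ pos η k ≤ N ∧ countUpTo η (pos η k) = repOne k := by
  obtain ⟨x, hxN, hx⟩ := exists_countUpTo_eq η (m := repOne k) (n := N)
    (by rw [countUpTo_eq_numParticles, hη]; exact repOne_le k)
  have hx1 : 1 ≤ x := Nat.one_le_iff_ne_zero.mpr fun h0 =>
    countUpTo_zero_ne_repOne η k (h0 ▸ hx)
  exact Nat.sInf_mem (s := {x | 1 ≤ x ∧ x ≤ N ∧ countUpTo η x = repOne k}) ⟨x, hx1, hxN, hx⟩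

lemma pos_occupied (hη : numParticles η = K) (k : ZMod K) :
    η ((pos η k : ℕ) : ZMod N) = true := by
  obtain ⟨h1, h2, h3⟩ := pos_spec hη k
  obtain ⟨p, hp⟩ : ∃ p, pos η k = p + 1 := ⟨pos η k - 1, by omega⟩
  by_contra hocc
  have hcount : countUpTo η p = repOne k := by
    rwa [hp, countUpTo_succ, ← hp, if_neg hocc, add_zero] at h3
  have hp1 : 1 ≤ p := Nat.one_le_iff_ne_zero.mpr fun h0 =>
    countUpTo_zero_ne_repOne η k (h0 ▸ hcount)
  have : pos η k ≤ p := Nat.sInf_le ⟨hp1, by omega, hcount⟩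
  omega

lemma pos_injective (hη : numParticles η = K) :
    Function.Injective fun k : ZMod K => ((pos η k : ℕ) : ZMod N) := by
  intro k k' h
  obtain ⟨h1, h2, h3⟩ := pos_spec hη k
  obtain ⟨h1', h2', h3'⟩ := pos_spec hη k'
  have hpos : pos η k = pos η k' := natCast_injOn_Icc ⟨h1, h2⟩ ⟨h1', h2'⟩ h
  exact repOne_injective (by rw [← h3, ← h3', hpos])

lemma bijective_pos (hη : numParticles η = K) :
    Function.Bijective fun k : ZMod K =>
      (⟨(pos η k : ℕ), pos_occupied hη k⟩ : {x : ZMod N // η x = true}) := by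
  rw [Fintype.bijective_iff_injective_and_card]
  refine ⟨fun k k' h => pos_injective hη (congrArg Subtype.val h), ?_⟩
  simp only [ZMod.card, Fintype.card_subtype]
  exact hη.symm

lemma sum_ite_pos_eq {R : Type*} [AddCommMonoidWithOne R] (hη : numParticles η = K)
    (x : ZMod N) :
    ∑ k : ZMod K, (if ((pos η k : ℕ) : ZMod N) = x then 1 else 0 : R)
      = if η x = true then 1 else 0 := by
  split_ifs with hx
  · obtain ⟨k₀, hk₀⟩ := (bijective_pos hη).2 ⟨x, hx⟩
    have hk₀ : ((pos η k₀ : ℕ) : ZMod N) = x := congrArg Subtype.val hk₀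
    refine (Finset.sum_eq_single k₀ (fun k _ hk => if_neg fun h => hk ?_) (by simp)).trans
      (if_pos hk₀)
    exact pos_injective hη (h.trans hk₀.symm)
  · refine Finset.sum_eq_zero fun k _ => if_neg fun h => hx ?_
    rw [← h]
    exact pos_occupied hη k

end Rank

section Jumps

variable {N : ℕ}

-- When the particle at `y` jumps to `y + z`, a tag at `x` moves to `if y = x then x + z else x`,
-- and a tag that ends up at `w` came from `if w = y + z then y else w`.

lemma swapConf_ne_self {η : Conf N} {y w : ZMod N} (hy : η y = true) (hw : η w = false) :
    swapConf η y w ≠ η := fun h => by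
  have := congrFun h y
  simp_all [swapConf]

lemma swapConf_tag_after {η : Conf N} {x y z : ZMod N} (hx : η x = true)
    (hyz : η (y + z) = false) :
    swapConf η y (y + z) (if y = x then x + z else x) = true := by
  unfold swapConf
  split_ifs <;> simp_all

lemma swapConf_tag_before {η : Conf N} {y z w : ZMod N} (hyz : η (y + z) = false)
    (hw : swapConf η y (y + z) w = true) :
    η (if w = y + z then y else w) = true := by
  unfold swapConf at hw
  split_ifs at hw ⊢ <;> simp_all

lemma tag_after_eq_iff {η : Conf N} {x y z w : ZMod N} (hx : η x = true)
    (hyz : η (y + z) = false) (hw : swapConf η y (y + z) w = true) :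
    (if y = x then x + z else x) = w ↔ x = if w = y + z then y else w := by
  unfold swapConf at hw
  split_ifs at hw ⊢ <;> grind

end Jumps

section Lumping

variable {N K : ℕ} [NeZero N]

def untag (p : TagT N K) : ErgoT N K := ⟨p.1.2, p.2.1⟩

lemma tagCount_self (p : ZMod N × Conf N) : tagCount p p = 0 := by
  rw [tagCount, Finset.card_eq_zero, Finset.filter_eq_empty_iff]
  rintro yz - ⟨hy, -, hyz, hp⟩
  exact swapConf_ne_self hy hyz (congrArg Prod.snd hp).symm

lemma jumpCount_self (η : Conf N) : jumpCount η η = 0 := by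
  rw [jumpCount, Finset.card_eq_zero, Finset.filter_eq_empty_iff]
  rintro yz - ⟨-, hy, hyz, h⟩
  exact swapConf_ne_self hy hyz h

lemma sum_fiber_ite_eq (σ : ErgoT N K) (v : ZMod N × Conf N) :
    ∑ r ∈ Finset.univ.filter (fun r : TagT N K => untag r = σ), (if r.1 = v then 1 else 0 : ℕ)
      = if v.2 = σ.1 ∧ v.2 v.1 = true then 1 else 0 := by
  split_ifs with hv
  · have hvσ : v.2 = σ.1 := hv.1
    rw [Finset.sum_eq_single_of_mem ⟨v, hvσ ▸ σ.2, hv.2⟩ (by simp [untag, Subtype.ext_iff, hvσ])]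
    · simp
    · exact fun r _ hr => if_neg fun h => hr (Subtype.ext h)
  · refine Finset.sum_eq_zero fun r hr => if_neg fun h => hv ?_
    subst h
    simp only [untag, Finset.mem_filter, Finset.mem_univ, true_and, Subtype.ext_iff] at hr
    exact ⟨hr, r.2.2⟩

lemma sum_tagCount_to_fiber (p : TagT N K) (σ : ErgoT N K) :
    ∑ r ∈ Finset.univ.filter (fun r => untag r = σ), tagCount p.1 r.1 = jumpCount p.1.2 σ.1 := by
  simp only [tagCount, jumpCount, Finset.card_filter]
  rw [Finset.sum_comm]
  refine Finset.sum_congr rfl fun yz _ => ?_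
  by_cases hjump : p.1.2 yz.1 = true ∧ p.1.2 (yz.1 - if yz.2 then 1 else -1) = true
      ∧ p.1.2 (yz.1 + if yz.2 then 1 else -1) = false
  · simp only [hjump, true_and, sum_fiber_ite_eq, swapConf_tag_after p.2.2 hjump.2.2, and_true]
  · refine (Finset.sum_eq_zero fun r _ => if_neg ?_).trans (if_neg ?_).symm
    · exact fun h => hjump ⟨h.1, h.2.1, h.2.2.1⟩
    · exact fun h => hjump ⟨h.2.1, h.1, h.2.2.1⟩

lemma sum_tagCount_from_fiber (σ : ErgoT N K) (q : TagT N K) :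
    ∑ p ∈ Finset.univ.filter (fun p => untag p = σ), tagCount p.1 q.1 = jumpCount σ.1 q.1.2 := by
  simp only [tagCount, jumpCount, Finset.card_filter]
  rw [Finset.sum_comm]
  refine Finset.sum_congr rfl fun yz _ => ?_
  set y := yz.1
  set z : ZMod N := if yz.2 then 1 else -1
  have hfib : ∀ p ∈ Finset.univ.filter (fun p => untag p = σ), p.1.2 = σ.1 := fun p hp =>
    congrArg Subtype.val (Finset.mem_filter.mp hp).2
  by_cases hjump : σ.1 y = true ∧ σ.1 (y - z) = true ∧ σ.1 (y + z) = false
  · by_cases hq : swapConf σ.1 y (y + z) = q.1.2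
    · have hw : swapConf σ.1 y (y + z) q.1.1 = true := hq ▸ q.2.2
      rw [if_pos ⟨hjump.2.1, hjump.1, hjump.2.2, hq⟩]
      calc _ = ∑ p ∈ Finset.univ.filter (fun p => untag p = σ),
            (if p.1 = ((if q.1.1 = y + z then y else q.1.1), σ.1) then 1 else 0) := by
            refine Finset.sum_congr rfl fun p hp => if_congr ?_ rfl rfl
            have hp2 := hfib p hp
            have hx : σ.1 p.1.1 = true := hp2 ▸ p.2.2
            rw [Prod.ext_iff, Prod.ext_iff, hp2, eq_comm (a := q.1.1),
              tag_after_eq_iff hx hjump.2.2 hw]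
            simp [hjump, hq]
        _ = 1 := by rw [sum_fiber_ite_eq, if_pos ⟨rfl, swapConf_tag_before hjump.2.2 hw⟩]
    · refine (Finset.sum_eq_zero fun p hp => if_neg fun h => hq ?_).trans
        (if_neg fun h => hq h.2.2.2).symm
      rw [← hfib p hp]
      exact (congrArg Prod.snd h.2.2.2).symm
  · refine (Finset.sum_eq_zero fun p hp => if_neg fun h => hjump ?_).trans (if_neg ?_).symm
    · rw [← hfib p hp]
      exact ⟨h.1, h.2.1, h.2.2.1⟩
    · exact fun h => hjump ⟨h.2.1, h.1, h.2.2.1⟩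

-- Without the explicit `N` and `K`, `*` falls back to the default `CStarMatrix` product.
theorem fiberIndicator_untag_mul_genTag :
    Matrix.fiberIndicator ℝ (untag (N := N) (K := K)) * genTag N K
      = genErgo N K * Matrix.fiberIndicator ℝ (untag (N := N) (K := K)) := by
  have hTag : genTag N K = Matrix.rateMatrix fun p q : TagT N K => (tagCount p.1 q.1 : ℝ) := rfl
  have hErgo : genErgo N K = Matrix.rateMatrix fun σ τ : ErgoT N K => (jumpCount σ.1 τ.1 : ℝ) :=
    rfl
  rw [hTag, hErgo]
  refine Matrix.fiberIndicator_mul_rateMatrix (fun p => by simp [tagCount_self])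
    (fun σ => by simp [jumpCount_self]) (fun p => ?_) (fun σ q => ?_)
  · rw [← Finset.sum_fiberwise Finset.univ untag]
    exact_mod_cast Finset.sum_congr rfl fun σ _ => sum_tagCount_to_fiber p σ
  · exact_mod_cast sum_tagCount_from_fiber σ q

lemma sum_ite_eq_pos [NeZero K] {η₀ : Conf N}
    (hη₀ : numParticles η₀ = K) (p : TagT N K) :
    ∑ k : ZMod K, (if p.1 = (((pos η₀ k : ℕ) : ZMod N), η₀) then 1 else 0 : ℝ)
      = if p.1.2 = η₀ then 1 else 0 := by
  split_ifs with hp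
  · have hocc : η₀ p.1.1 = true := hp ▸ p.2.2
    refine (Finset.sum_congr rfl fun k _ => if_congr ?_ rfl rfl).trans
      ((sum_ite_pos_eq hη₀ p.1.1).trans (if_pos hocc))
    rw [Prod.ext_iff, hp, eq_comm]
    simp
  · exact Finset.sum_eq_zero fun k _ => if_neg fun h => hp (congrArg Prod.snd h)

end Lumping

theorem fep_tagged_uniform_rank_general
    (N K : ℕ) [NeZero N] [NeZero K]
    (η₀ : Conf N) (hη₀ : numParticles η₀ = K ∧ isErgodic η₀) (t : ℝ)
    (k : ZMod K) (η : Conf N) (hη : numParticles η = K ∧ isErgodic η)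
    (hmem : ((((pos η k : ℕ) : ZMod N), η) : ZMod N × Conf N)
      ∈ {p : ZMod N × Conf N | (numParticles p.2 = K ∧ isErgodic p.2) ∧ p.2 p.1 = true}) :
    Matrix.vecMul
        (fun p : TagT N K =>
          ∑ k' : ZMod K, (1 / (K : ℝ))
            * (if p.1 = ((((pos η₀ k' : ℕ) : ZMod N), η₀) : ZMod N × Conf N) then 1 else 0))
        (NormedSpace.exp (t • genTag N K))
        ⟨((((pos η k : ℕ) : ZMod N), η) : ZMod N × Conf N), hmem⟩
      = (1 / (K : ℝ)) * NormedSpace.exp (t • genErgo N K) ⟨η₀, hη₀⟩ ⟨η, hη⟩ := by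
  have hμ₀ : (fun p : TagT N K => ∑ k' : ZMod K, (1 / (K : ℝ))
      * (if p.1 = ((((pos η₀ k' : ℕ) : ZMod N), η₀) : ZMod N × Conf N) then 1 else 0))
      = (1 / (K : ℝ)) • Matrix.fiberIndicator ℝ untag ⟨η₀, hη₀⟩ := by
    funext p
    rw [← Finset.mul_sum, sum_ite_eq_pos hη₀.1]
    simp [Matrix.fiberIndicator, untag, Subtype.ext_iff]
  have hexp : exp (t • genErgo N K) * Matrix.fiberIndicator ℝ (untag (N := N) (K := K))
      = Matrix.fiberIndicator ℝ untag * exp (t • genTag N K) :=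
    Matrix.exp_mul_eq_mul_exp_of_mul_eq (by
      rw [Matrix.smul_mul, Matrix.mul_smul, fiberIndicator_untag_mul_genTag])
  have hentry := congrFun (congrFun hexp ⟨η₀, hη₀⟩) ⟨_, hmem⟩
  rw [Matrix.mul_fiberIndicator_apply] at hentry
  rw [hμ₀, Matrix.smul_vecMul, Pi.smul_apply, smul_eq_mul]
  exact congrArg _ hentry.symm

/-- **Tagged particle with uniform rank.**  For `N ≥ 2`, `N/2 < K < N`, `η₀ ∈ ℰ_{N,K}` and
`t ≥ 0`: starting the tagged-particle FEP from `μ₀ = (1/K) Σ_k δ_{(x_k(η₀), η₀)}`, the mass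
at time `t` of the state `(x_k(η), η)` equals `(1/K) (δ_{η₀} e^{tQ^ℰ})(η)`, for every
`k ∈ ℤ/Kℤ` and every `η ∈ ℰ_{N,K}`; in other words, the pushforward of `μ_t` under
`(x,η) ↦ (r(x,η), η)` is `Unif(ℤ/Kℤ) ⊗ δ_{η₀} e^{tQ^ℰ}`. -/
theorem fep_tagged_uniform_rank
    (N K : ℕ) [NeZero N] [NeZero K] (hN : 2 ≤ N) (h1 : N < 2 * K) (h2 : K < N)
    (η₀ : Conf N) (hη₀ : numParticles η₀ = K ∧ isErgodic η₀) (t : ℝ) (ht : 0 ≤ t)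
    (k : ZMod K) (η : Conf N) (hη : numParticles η = K ∧ isErgodic η)
    (hmem : ((((pos η k : ℕ) : ZMod N), η) : ZMod N × Conf N)
      ∈ {p : ZMod N × Conf N | (numParticles p.2 = K ∧ isErgodic p.2) ∧ p.2 p.1 = true}) :
    Matrix.vecMul
        (fun p : TagT N K =>
          ∑ k' : ZMod K, (1 / (K : ℝ))
            * (if p.1 = ((((pos η₀ k' : ℕ) : ZMod N), η₀) : ZMod N × Conf N) then 1 else 0))
        (NormedSpace.exp (t • genTag N K))
        ⟨((((pos η k : ℕ) : ZMod N), η) : ZMod N × Conf N), hmem⟩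
      = (1 / (K : ℝ)) * NormedSpace.exp (t • genErgo N K) ⟨η₀, hη₀⟩ ⟨η, hη⟩ :=
  fep_tagged_uniform_rank_general N K η₀ hη₀ t k η hη hmem

end
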